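/- Let K be a field, A a subring of K, and Σ an infinite, locally finite subset of Zar(K|A). Then the constructible closure of Σ in Zar(K|A) equals Σ ∪ {K}. -/

import Mathlib

/-- The Zariski topology on the space of valuation subrings of a field `K`: it is generated
by the basic open sets `B_F = {V | F ⊆ V}`, for `F` a finite subset of `K`. -/
def zarTop (K : Type*) [Field K] : TopologicalSpace (ValuationSubring K) :=
  TopologicalSpace.generateFrom
    {S : Set (ValuationSubring K) |
      ∃ F : Finset K, S = {V : ValuationSubring K | ∀ x ∈ F, x ∈ V}}

/-- The constructible (patch) topology on a topological space `X`: the topology generated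
by the quasi-compact open sets together with their complements. -/
def constructibleTop (X : Type*) [TopologicalSpace X] : TopologicalSpace X :=
  TopologicalSpace.generateFrom
    ({U : Set X | IsOpen U ∧ IsCompact U} ∪ (compl '' {U : Set X | IsOpen U ∧ IsCompact U}))

/-!
In the constructible topology the sets `{V | x ∈ V}` and their complements are open, so it is
Hausdorff. If `W ≠ K`, pick `t ∉ W`: by local finiteness the constructible neighbourhood
`{V | t ∉ V}` of `W` meets `Σ` in finitely many points, so `W` lies in the closure of `Σ` only if
`W ∈ Σ`. Conversely, `Σ` tends to `K` along the cofinite filter in the Zariski topology, and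
since `K` is a generic point of `Zar(K|A)` it does so in the constructible topology as well.
-/

open Filter Set Topology

section Constructible

variable {X : Type*} [TopologicalSpace X]

theorem isOpen_constructibleTop_of_isCompact {U : Set X} (hU : IsOpen U) (hc : IsCompact U) :
    IsOpen[constructibleTop X] U :=
  .basic _ (.inl ⟨hU, hc⟩)

theorem isOpen_constructibleTop_compl_of_isCompact {U : Set X} (hU : IsOpen U)
    (hc : IsCompact U) : IsOpen[constructibleTop X] Uᶜ :=
  .basic _ (.inr ⟨U, ⟨hU, hc⟩, rfl⟩)

/-- The complement of a nonempty open set never contains a generic point. -/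
theorem nhds_le_nhds_constructibleTop_of_forall_specializes {p : X} (hp : ∀ x, p ⤳ x) :
    𝓝 p ≤ @nhds X (constructibleTop X) p := by
  rw [constructibleTop, TopologicalSpace.nhds_generateFrom]
  refine le_iInf₂ fun s ⟨hps, hs⟩ => le_principal_iff.2 ?_
  rcases hs with ⟨hso, -⟩ | ⟨C, ⟨hCo, -⟩, rfl⟩
  · exact hso.mem_nhds hps
  · exact univ_mem' fun x hxC => hps ((hp x).mem_open hCo hxC)

end Constructible

namespace ValuationSubring

variable {K : Type*} [Field K]

attribute [local instance] zarTop

theorem isOpen_setOf_mem (x : K) : IsOpen {V : ValuationSubring K | x ∈ V} :=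
  .basic _ ⟨{x}, by simp⟩

theorem tendsto_nhds_iff {ι : Type*} {l : Filter ι} {f : ι → ValuationSubring K}
    {W : ValuationSubring K} : Tendsto f l (𝓝 W) ↔ ∀ x ∈ W, ∀ᶠ i in l, x ∈ f i := by
  refine ⟨fun h x hx => h ((isOpen_setOf_mem x).mem_nhds hx), fun h => ?_⟩
  rw [show 𝓝 W = _ from TopologicalSpace.nhds_generateFrom]
  refine tendsto_iInf.2 fun s => tendsto_iInf.2 fun ⟨hWs, F, hs⟩ => ?_
  subst hs
  exact tendsto_principal.2 <| (eventually_all_finset F).2 fun x hx => h x (hWs x hx)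

def ultrafilterLimit (𝒰 : Ultrafilter (ValuationSubring K)) : ValuationSubring K where
  carrier := {x | ∀ᶠ V in (𝒰 : Filter (ValuationSubring K)), x ∈ V}
  one_mem' := univ_mem' fun V => V.one_mem
  zero_mem' := univ_mem' fun V => V.zero_mem
  mul_mem' ha hb := (Eventually.and ha hb).mono fun V h => V.mul_mem _ _ h.1 h.2
  add_mem' ha hb := (Eventually.and ha hb).mono fun V h => V.add_mem _ _ h.1 h.2
  neg_mem' ha := Eventually.mono ha fun V h => V.neg_mem _ h
  mem_or_inv_mem' x := Ultrafilter.eventually_or.1 (univ_mem' fun V => V.mem_or_inv_mem x)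

theorem mem_ultrafilterLimit {𝒰 : Ultrafilter (ValuationSubring K)} {x : K} :
    x ∈ ultrafilterLimit 𝒰 ↔ ∀ᶠ V in (𝒰 : Filter (ValuationSubring K)), x ∈ V :=
  Iff.rfl

theorem ultrafilter_le_nhds_ultrafilterLimit (𝒰 : Ultrafilter (ValuationSubring K)) :
    (𝒰 : Filter (ValuationSubring K)) ≤ 𝓝 (ultrafilterLimit 𝒰) :=
  tendsto_nhds_iff (f := id).2 fun _ => mem_ultrafilterLimit.1

theorem isCompact_setOf_subset (F : Set K) : IsCompact {V : ValuationSubring K | F ⊆ V} :=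
  isCompact_iff_ultrafilter_le_nhds'.2 fun 𝒰 hF => ⟨ultrafilterLimit 𝒰,
    fun _ hx => mem_ultrafilterLimit.2 <| mem_of_superset hF fun _ hV => hV hx,
    ultrafilter_le_nhds_ultrafilterLimit 𝒰⟩

theorem top_specializes (V : ValuationSubring K) : (⊤ : ValuationSubring K) ⤳ V :=
  specializes_iff_pure.2 <| tendsto_nhds_iff (f := id).2 fun x _ => eventually_pure.2 (mem_top x)

end ValuationSubring

abbrev Zar {K : Type*} [Field K] (A : Subring K) : Type _ :=
  {V : ValuationSubring K // (A : Set K) ⊆ ↑V}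

namespace Zar

variable {K : Type*} [Field K] {A : Subring K}

attribute [local instance] zarTop

instance : Top (Zar A) := ⟨⟨⊤, fun x _ => ValuationSubring.mem_top x⟩⟩

theorem isOpen_setOf_mem (x : K) : IsOpen {V : Zar A | x ∈ V.1} :=
  (ValuationSubring.isOpen_setOf_mem x).preimage continuous_subtype_val

theorem isCompact_setOf_mem (x : K) : IsCompact {V : Zar A | x ∈ V.1} := by
  rw [IsEmbedding.subtypeVal.isInducing.isCompact_iff]
  convert ValuationSubring.isCompact_setOf_subset (insert x (A : Set K)) using 1
  ext V
  simp [insert_subset_iff, and_comm]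

theorem t2Space_constructibleTop : @T2Space (Zar A) (constructibleTop (Zar A)) := by
  refine @T2Space.mk _ (constructibleTop _) fun V W hne => ?_
  obtain ⟨x, hx⟩ : ∃ x, ¬(x ∈ V.1 ↔ x ∈ W.1) := by
    by_contra! h
    exact hne (Subtype.ext (SetLike.ext h))
  have hB := isOpen_constructibleTop_of_isCompact (isOpen_setOf_mem (A := A) x)
    (isCompact_setOf_mem x)
  have hBc := isOpen_constructibleTop_compl_of_isCompact (isOpen_setOf_mem (A := A) x)
    (isCompact_setOf_mem x)
  by_cases hV : x ∈ V.1
  · exact ⟨_, _, hB, hBc, hV, fun hW => hx (iff_of_true hV hW), disjoint_compl_right⟩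
  · exact ⟨_, _, hBc, hB, hV, not_not.1 fun hW => hx (iff_of_false hV hW), disjoint_compl_left⟩

theorem finite_setOf_notMem_of_locallyFinite {S : Set (Zar A)}
    (hlf : ∀ x : K, x ≠ 0 →
      {V ∈ S | ¬ (x ∈ (V : ValuationSubring K) ∧ x⁻¹ ∈ (V : ValuationSubring K))}.Finite)
    (x : K) : {V ∈ S | x ∉ V.1}.Finite := by
  rcases eq_or_ne x 0 with rfl | hx
  · simp [zero_mem]
  · exact (hlf x hx).subset fun V ⟨hVS, hxV⟩ => ⟨hVS, fun h => hxV h.1⟩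

theorem mem_of_mem_closure_constructibleTop_of_ne_top {S : Set (Zar A)}
    (hfin : ∀ x : K, {V ∈ S | x ∉ V.1}.Finite) {W : Zar A}
    (hW : W ∈ @closure _ (constructibleTop (Zar A)) S) (hWtop : W ≠ ⊤) : W ∈ S := by
  obtain ⟨t, -, ht⟩ := SetLike.exists_of_lt (lt_top_iff_ne_top.2 fun h => hWtop (Subtype.ext h))
  have hU := isOpen_constructibleTop_compl_of_isCompact (isOpen_setOf_mem (A := A) t)
    (isCompact_setOf_mem t)
  have hfinU : ({V : Zar A | t ∈ V.1}ᶜ ∩ S).Finite :=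
    (hfin t).subset fun V ⟨htV, hVS⟩ => ⟨hVS, htV⟩
  let _ := constructibleTop (Zar A)
  have := t2Space_constructibleTop (A := A)
  have hWU := hU.inter_closure ⟨ht, hW⟩
  rw [hfinU.isClosed.closure_eq] at hWU
  exact hWU.2

theorem top_mem_closure_constructibleTop {S : Set (Zar A)} (hinf : S.Infinite)
    (hfin : ∀ x : K, {V ∈ S | x ∉ V.1}.Finite) :
    ⊤ ∈ @closure _ (constructibleTop (Zar A)) S := by
  have := hinf.cofinite_inf_principal_neBot
  have hgen : ∀ V : Zar A, ⊤ ⤳ V := fun V =>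
    (subtype_specializes_iff _ _).2 (ValuationSubring.top_specializes V.1)
  have hlim : Tendsto id (cofinite ⊓ 𝓟 S) (𝓝 (⊤ : Zar A)) :=
    tendsto_subtype_rng.2 <| ValuationSubring.tendsto_nhds_iff.2 fun x _ =>
      mem_inf_of_inter (hfin x).compl_mem_cofinite (mem_principal_self S)
        fun V ⟨hV, hVS⟩ => not_not.1 fun hxV => hV ⟨hVS, hxV⟩
  have hlim_cons := hlim.mono_right (nhds_le_nhds_constructibleTop_of_forall_specializes hgen)
  let _ := constructibleTop (Zar A)
  exact mem_closure_of_tendsto hlim_cons (mem_inf_of_right (mem_principal_self S))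

end Zar

/-- If `Σ` is an infinite, locally finite collection of valuation domains in `Zar(K|A)`
(each nonzero `x ∈ K` is a non-unit in only finitely many members of `Σ`), then the
closure of `Σ` in the constructible topology of `Zar(K|A)` is `Σ ∪ {K}`, where `K`
denotes the trivial valuation domain. -/
theorem locally_finite_cons_closure {K : Type*} [Field K] (A : Subring K)
    (S : Set {V : ValuationSubring K // (A : Set K) ⊆ ↑V}) (hinf : S.Infinite)
    (hlf : ∀ x : K, x ≠ 0 →
      {V ∈ S | ¬ (x ∈ (V : ValuationSubring K) ∧ x⁻¹ ∈ (V : ValuationSubring K))}.Finite) :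
    letI : TopologicalSpace (ValuationSubring K) := zarTop K
    @closure _ (constructibleTop {V : ValuationSubring K // (A : Set K) ⊆ ↑V}) S =
      S ∪ {⟨(⊤ : ValuationSubring K), fun x _ => Set.mem_univ x⟩} := by
  let _ := zarTop K
  let _ := constructibleTop (Zar A)
  have hfin := Zar.finite_setOf_notMem_of_locallyFinite hlf
  refine Subset.antisymm (fun W hW => ?_) (union_subset subset_closure
    (singleton_subset_iff.2 (Zar.top_mem_closure_constructibleTop hinf hfin)))
  by_cases hWtop : W = ⊤
  · exact Or.inr hWtop
  · exact Or.inl (Zar.mem_of_mem_closure_constructibleTop_of_ne_top hfin hW hWtop)
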